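/- In any execution of the OTM abstract machine, a thread running inside a transaction can read or write a location only if, as a result of the transition, that location is claimed by its transaction: after any Read1, Read2, Write1, or Write2 transition performed by a thread of transaction k on location r, the working memory Δ of the resulting state maps r to a pair (M, j) where j is the (possibly merged) transaction name of that thread in the resulting state. Consequently, at any point of an execution, at most one active transaction issues operations on any given location. -/

import Mathlib

/-!  A formalisation of the OTM (Open Transactional Memory) abstract machine
     of "Open Transactional Memory" (Figures 3–8), together with
     Guerraoui–Kapałka style histories and opacity graphs. -/

abbrev Loc : Type := ℕ
abbrev TrName : Type := ℕ
abbrev TId : Type := ℕ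

/-- Terms of the Haskell-like language with the OTM primitives (Fig. 3). -/
inductive Term : Type where
  | var : ℕ → Term
  | app : Term → Term → Term
  | lam : ℕ → Term → Term
  | loc : Loc → Term
  | tidT : TId → Term
  | chr : Char → Term
  | unit : Term
  | ret : Term → Term
  | bind : Term → Term → Term
  | throw : Term → Term
  | catchE : Term → Term → Term
  | putChar : Char → Term
  | getChar : Term
  | fork : Term → Term
  | atomic : Term → Term
  | isolated : Term → Term
  | retry : Term
  | orElse : Term → Term → Term
  | newOTVar : Term → Term
  | readOTVar : Loc → Term
  | writeOTVar : Loc → Term → Term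
  deriving DecidableEq

/-- Values (Fig. 3): everything except variables and applications. -/
def Term.isValue : Term → Bool
  | .var _ => false
  | .app _ _ => false
  | _ => true

/-- Pure term reductions `M → N` (Fig. 4), parameterised by the
    (otherwise unspecified) evaluation function `𝒱`. -/
inductive TermStep (V : Term → Option Term) : Term → Term → Prop where
  | eval {M N : Term} :
      M.isValue = false → V M = some N → N.isValue = true → TermStep V M N
  | bindVal {M N : Term} : TermStep V (.bind (.ret M) N) (.app N M)
  | bindRetry {M : Term} : TermStep V (.bind .retry M) .retry
  | bindThrow {M N : Term} : TermStep V (.bind (.throw N) M) (.throw N)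
  | catchRetry {M : Term} : TermStep V (.catchE .retry M) .retry
  | catchRet {M N : Term} : TermStep V (.catchE (.ret N) M) (.ret N)
  | catchThrow {M N : Term} : TermStep V (.catchE (.throw M) N) (.app N M)

/-- Evaluation contexts `𝔼 ::= [] | 𝔼 >>= M`: a context is the list of
    the second arguments of the enclosing binds. -/
abbrev Ctx : Type := List Term

/-- `plug E M` is `𝔼[M]`. -/
def plug (E : Ctx) (M : Term) : Term := E.foldl Term.bind M

/-- Threads: `⟨M⟩_t` (outside transactions) and `⟨M; N⟩_{t,k}`
    (inside transaction `k`, with continuation `N`). -/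
inductive Thread : Type where
  | plain : TId → Term → Thread
  | tx : TId → Term → Term → TrName → Thread
  deriving DecidableEq

def Thread.tid : Thread → TId
  | .plain t _ => t
  | .tx t _ _ _ => t

/-- Thread families, presented as lists (parallel composition modulo
    permutation is built into the step relation). -/
abbrev Family : Type := List Thread

def Family.tids (P : Family) : List TId := P.map Thread.tid

/-- The names of the active transactions of a family (`transactions(P)`). -/
def Family.txNames (P : Family) : List TrName :=
  P.filterMap fun T =>
    match T with
    | .tx _ _ _ k => some k
    | .plain _ _ => none

/-- The forest `Ψ` of thread identifiers. -/
structure Psi : Type where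
  nodes : Set TId
  parent : TId → Option TId

def Psi.addRoot (ψ : Psi) (t : TId) : Psi :=
  ⟨insert t ψ.nodes, ψ.parent⟩

/-- `add_child(t, t', Ψ)`. -/
def Psi.addChild (ψ : Psi) (t t' : TId) : Psi :=
  ⟨insert t' ψ.nodes, fun u => if u = t' then some t else ψ.parent u⟩

/-- `ψ.rootOf t r` : `r = root(t, Ψ)`. -/
def Psi.rootOf (ψ : Psi) (t r : TId) : Prop :=
  Relation.ReflTransGen (fun a b => ψ.parent a = some b) t r ∧ ψ.parent r = none

open Classical in
/-- `remove(r, Ψ)`: remove the whole tree rooted at `r`. -/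
noncomputable def Psi.remove (ψ : Psi) (r : TId) : Psi :=
  ⟨{t ∈ ψ.nodes | ¬ ψ.rootOf t r}, fun t => if ψ.rootOf t r then none else ψ.parent t⟩

/-- The memory `Σ = ⟨Θ, Δ, Ψ⟩` (together with the supply `used` of
    transaction names already used, guaranteeing freshness of new names). -/
structure Mem : Type where
  heap : Loc → Option Term
  work : Loc → Option (Term × TrName)
  psi : Psi
  used : Set TrName

/-- Machine states `(Σ; P)`. -/
structure MState : Type where
  mem : Mem
  threads : Family

/-- Pointwise update of a partial function. -/
def updFn {α : Type} (f : Loc → Option α) (r : Loc) (v : α) : Loc → Option α :=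
  fun s => if s = r then some v else f s

/-- `Δ[k ↦ j]` : rename every claim of transaction `k` into `j` (Fig. 8). -/
def renameWork (Δ : Loc → Option (Term × TrName)) (k j : TrName) :
    Loc → Option (Term × TrName) :=
  fun r => (Δ r).map fun p => if p.2 = k then (p.1, j) else p

def Thread.renameTx (T : Thread) (k j : TrName) : Thread :=
  match T with
  | .tx t M N k' => if k' = k then .tx t M N j else .tx t M N k'
  | .plain t M => .plain t M

/-- `P[k ↦ j]` (Fig. 8). -/
def Family.renameTx (P : Family) (k j : TrName) : Family :=
  P.map (Thread.renameTx · k j)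

/-- `cleanup(k, Σ)` (Fig. 8). -/
def cleanup (k : TrName) (Δ : Loc → Option (Term × TrName)) :
    Loc → Option (Term × TrName) := fun r =>
  match Δ r with
  | some (M, k') => if k' = k then none else some (M, k')
  | none => none

/-- `commit(k, Σ)` (Fig. 8). -/
def commitMem (k : TrName) (Θ : Loc → Option Term)
    (Δ : Loc → Option (Term × TrName)) : Loc → Option Term := fun r =>
  match Δ r with
  | some (M, k') => if k' = k then some M else Θ r
  | none => Θ r

/-- `leak(k, Σ)` (Fig. 8). -/
def leakMem (k : TrName) (Θ : Loc → Option Term)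
    (Δ : Loc → Option (Term × TrName)) : Loc → Option Term := fun r =>
  match Θ r with
  | some M => some M
  | none =>
    match Δ r with
    | some (M, k') => if k' = k then some M else none
    | none => none

/-- Operations recorded in histories (reads, writes, commits, aborts and,
    for OTM, explicit merges of one transaction into another). -/
inductive Op : Type where
  | read : TrName → Loc → Term → Op
  | write : TrName → Loc → Term → Op
  | commit : TrName → Op
  | abort : TrName → Op
  | merge : TrName → TrName → Op
  deriving DecidableEq

/-- Histories: time-ordered sequences of operations. -/
abbrev History : Type := List Op

/-- Transition labels `β` (Figs. 5–7). -/
inductive Label : Type where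
  | tau : Label
  | inpC : Char → Label
  | outC : Char → Label
  | newT : TrName → Label
  | co : TrName → Label
  | ab : TrName → TId → Term → Label
  | abBar : TrName → TId → Term → Label
  deriving DecidableEq

/-- `transaction(β)` (Fig. 8). -/
def Label.txName : Label → Option TrName
  | .newT k => some k
  | .co k => some k
  | .ab k _ _ => some k
  | .abBar k _ _ => some k
  | _ => none

mutual
  /-- The state transitions `(Σ; P) --β--> (Σ'; P')` of the OTM abstract
      machine (Figs. 5, 6 and 7), instrumented with the list of history
      operations the transition issues. -/
  inductive Step (V : Term → Option Term) :
      MState → Label → List Op → MState → Prop where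
    /- structural congruence: `∥` is commutative and associative -/
    | permC {m m' : Mem} {P Q P' Q' : Family} {β : Label} {ops : List Op} :
        List.Perm P Q → List.Perm P' Q' →
        Step V ⟨m, P⟩ β ops ⟨m', P'⟩ → Step V ⟨m, Q⟩ β ops ⟨m', Q'⟩
    /- IO transitions (Fig. 5) -/
    | inChar {m : Mem} {P : Family} {E : Ctx} {t : TId} {c : Char} :
        Step V ⟨m, .plain t (plug E .getChar) :: P⟩ (.inpC c) []
               ⟨m, .plain t (plug E (.ret (.chr c))) :: P⟩
    | outChar {m : Mem} {P : Family} {E : Ctx} {t : TId} {c : Char} :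
        Step V ⟨m, .plain t (plug E (.putChar c)) :: P⟩ (.outC c) []
               ⟨m, .plain t (plug E (.ret .unit)) :: P⟩
    | termIO {m : Mem} {P : Family} {E : Ctx} {t : TId} {M N : Term} :
        TermStep V M N →
        Step V ⟨m, .plain t (plug E M) :: P⟩ .tau []
               ⟨m, .plain t (plug E N) :: P⟩
    | forkIO {m : Mem} {P : Family} {E : Ctx} {t t' : TId} {M : Term} :
        t' ∉ Family.tids (.plain t (plug E (.fork M)) :: P) →
        Step V ⟨m, .plain t (plug E (.fork M)) :: P⟩ .tau []
               ⟨{m with psi := m.psi.addRoot t'},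
                .plain t (plug E (.ret (.tidT t'))) :: .plain t' M :: P⟩
    /- transactional τ-transitions (Fig. 6) -/
    | termT {m : Mem} {P : Family} {E : Ctx} {t : TId} {k : TrName} {M M' N : Term} :
        TermStep V M M' →
        Step V ⟨m, .tx t (plug E M) N k :: P⟩ .tau []
               ⟨m, .tx t (plug E M') N k :: P⟩
    | forkT {m : Mem} {P : Family} {E : Ctx} {t t' : TId} {k : TrName} {M N : Term} :
        t' ∉ Family.tids (.tx t (plug E (.fork M)) N k :: P) →
        Step V ⟨m, .tx t (plug E (.fork M)) N k :: P⟩ .tau []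
               ⟨{m with psi := m.psi.addChild t t'},
                .tx t (plug E (.ret (.tidT t'))) N k :: .tx t' M (.ret .unit) k :: P⟩
    | newVar {m : Mem} {P : Family} {E : Ctx} {t : TId} {k : TrName} {M N : Term} {r : Loc} :
        m.heap r = none → m.work r = none →
        Step V ⟨m, .tx t (plug E (.newOTVar M)) N k :: P⟩ .tau [.write k r M]
               ⟨{m with work := updFn m.work r (M, k)},
                .tx t (plug E (.ret (.loc r))) N k :: P⟩
    | read1 {m : Mem} {P : Family} {E : Ctx} {t : TId} {k : TrName} {M N : Term} {r : Loc} :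
        m.work r = none → m.heap r = some M →
        Step V ⟨m, .tx t (plug E (.readOTVar r)) N k :: P⟩ .tau [.read k r M]
               ⟨{m with work := updFn m.work r (M, k)},
                .tx t (plug E (.ret M)) N k :: P⟩
    | read2 {m : Mem} {P : Family} {E : Ctx} {t : TId} {k j : TrName} {M N : Term} {r : Loc} :
        m.work r = some (M, j) →
        Step V ⟨m, .tx t (plug E (.readOTVar r)) N k :: P⟩ .tau
               (if k = j then [.read k r M] else [.merge k j, .read j r M])
               ⟨{m with work := renameWork m.work k j},
                Family.renameTx (.tx t (plug E (.ret M)) N k :: P) k j⟩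
    | write1 {m : Mem} {P : Family} {E : Ctx} {t : TId} {k : TrName} {M N : Term} {r : Loc} :
        m.work r = none →
        Step V ⟨m, .tx t (plug E (.writeOTVar r M)) N k :: P⟩ .tau [.write k r M]
               ⟨{m with work := updFn m.work r (M, k)},
                .tx t (plug E (.ret .unit)) N k :: P⟩
    | write2 {m : Mem} {P : Family} {E : Ctx} {t : TId} {k j : TrName} {M M₀ N : Term} {r : Loc} :
        m.work r = some (M₀, j) →
        Step V ⟨m, .tx t (plug E (.writeOTVar r M)) N k :: P⟩ .tau
               (if k = j then [.write k r M] else [.merge k j, .write j r M])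
               ⟨{m with work := updFn (renameWork m.work k j) r (M, j)},
                Family.renameTx (.tx t (plug E (.ret .unit)) N k :: P) k j⟩
    | orElse1 {m m' : Mem} {P Q₁ Q₂ : Family} {E : Ctx} {t : TId} {k j : TrName}
        {M M' N N' R : Term} {ops : List Op} :
        (R = .ret N' ∨ R = .throw N') →
        StepTauStar V ⟨m, .tx t M (.ret .unit) k :: P⟩ ops
                       ⟨m', Q₁ ++ .tx t R (.ret .unit) j :: Q₂⟩ →
        Step V ⟨m, .tx t (plug E (.orElse M M')) N k :: P⟩ .tau ops
               ⟨m', Q₁ ++ .tx t (plug E R) N j :: Q₂⟩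
    | orElse2 {m m' : Mem} {P Q₁ Q₂ : Family} {E : Ctx} {t : TId} {k j : TrName}
        {M M' N : Term} {ops : List Op} :
        StepTauStar V ⟨m, .tx t M (.ret .unit) k :: P⟩ ops
                       ⟨m', Q₁ ++ .tx t .retry (.ret .unit) j :: Q₂⟩ →
        Step V ⟨m, .tx t (plug E (.orElse M M')) N k :: P⟩ .tau []
               ⟨m, .tx t (plug E M') N k :: P⟩
    | isolatedR {m m' : Mem} {P Q₁ Q₂ : Family} {E : Ctx} {t : TId} {k j : TrName}
        {M N N' R : Term} {ops : List Op} :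
        (R = .ret N' ∨ R = .throw N') →
        StepTauStar V ⟨m, .tx t M (.ret .unit) k :: P⟩ ops
                       ⟨m', Q₁ ++ .tx t R (.ret .unit) j :: Q₂⟩ →
        Step V ⟨m, .tx t (plug E (.isolated M)) N k :: P⟩ .tau ops
               ⟨m', Q₁ ++ .tx t (plug E R) N j :: Q₂⟩
    /- transaction management transitions (Fig. 7) -/
    | newTx {m : Mem} {t : TId} {M N : Term} {k : TrName} :
        k ∉ m.used →
        Step V ⟨m, [.plain t (.bind (.atomic M) N)]⟩ (.newT k) []
               ⟨{m with used := insert k m.used}, [.tx t M N k]⟩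
    | commitTx {m : Mem} {t : TId} {M N : Term} {k : TrName} :
        Step V ⟨m, [.tx t (.ret M) N k]⟩ (.co k) [.commit k]
               ⟨{m with heap := commitMem k m.heap m.work,
                        work := cleanup k m.work},
                [.plain t (.bind (.ret M) N)]⟩
    | abort1 {m : Mem} {t : TId} {M N : Term} {k : TrName} {r : TId} :
        m.psi.rootOf t r →
        Step V ⟨m, [.tx t (.throw M) N k]⟩ (.ab k t M) [.abort k]
               ⟨{m with heap := leakMem k m.heap m.work,
                        work := cleanup k m.work,
                        psi := m.psi.remove r},
                [.plain t (.bind (.throw M) N)]⟩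
    | abort2 {m : Mem} {t t' : TId} {M M' N : Term} {k : TrName} {r : TId} :
        m.psi.rootOf t r → m.psi.rootOf t' r →
        Step V ⟨m, [.tx t' M' N k]⟩ (.abBar k t M) []
               ⟨{m with heap := leakMem k m.heap m.work,
                        work := cleanup k m.work,
                        psi := m.psi.remove r},
                [.plain t' (.bind (.throw M) N)]⟩
    | abort3 {m : Mem} {t t' : TId} {M M' N : Term} {k : TrName} {r : TId} :
        m.psi.rootOf t r → ¬ m.psi.rootOf t' r →
        Step V ⟨m, [.tx t' M' N k]⟩ (.abBar k t M) []
               ⟨{m with heap := leakMem k m.heap m.work,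
                        work := cleanup k m.work,
                        psi := m.psi.remove r},
                [.plain t' .retry]⟩
    | mcastAb {m m' : Mem} {P P' Q Q' : Family} {k : TrName} {t : TId} {M : Term}
        {ops₁ ops₂ : List Op} :
        Step V ⟨m, P⟩ (.ab k t M) ops₁ ⟨m', P'⟩ →
        Step V ⟨m, Q⟩ (.abBar k t M) ops₂ ⟨m', Q'⟩ →
        Step V ⟨m, P ++ Q⟩ (.ab k t M) (ops₁ ++ ops₂) ⟨m', P' ++ Q'⟩
    | mcastCo {m m' : Mem} {P P' Q Q' : Family} {k : TrName} {ops₁ ops₂ : List Op} :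
        Step V ⟨m, P⟩ (.co k) ops₁ ⟨m', P'⟩ →
        Step V ⟨m, Q⟩ (.co k) ops₂ ⟨m', Q'⟩ →
        Step V ⟨m, P ++ Q⟩ (.co k) ((ops₁ ++ ops₂).dedup) ⟨m', P' ++ Q'⟩
    | mcastGroup {m m' : Mem} {P P' Q : Family} {β : Label} {k : TrName} {ops : List Op} :
        Step V ⟨m, P⟩ β ops ⟨m', P'⟩ →
        β.txName = some k → k ∉ Family.txNames Q →
        Step V ⟨m, P ++ Q⟩ β ops ⟨m', P' ++ Q⟩

  /-- Reflexive-transitive closure of internal (`τ`) transitions,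
      accumulating the issued operations. -/
  inductive StepTauStar (V : Term → Option Term) :
      MState → List Op → MState → Prop where
    | refl (s : MState) : StepTauStar V s [] s
    | cons {s₁ s₂ s₃ : MState} {ops₁ ops₂ : List Op} :
        Step V s₁ .tau ops₁ s₂ → StepTauStar V s₂ ops₂ s₃ →
        StepTauStar V s₁ (ops₁ ++ ops₂) s₃
end

/-- Executions of the abstract machine, together with the history
    (sequence of issued operations) they generate. -/
inductive Exec (V : Term → Option Term) : MState → History → MState → Prop where
  | refl (s : MState) : Exec V s [] s
  | step {s₁ s₂ s₃ : MState} {β : Label} {ops : List Op} {H : History} :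
      Step V s₁ β ops s₂ → Exec V s₂ H s₃ → Exec V s₁ (ops ++ H) s₃

/-- The initial state of an OTM program `M` run by a main thread `t`. -/
def initState (M : Term) (t : TId) : MState :=
  ⟨⟨fun _ => none, fun _ => none, ⟨{t}, fun _ => none⟩, ∅⟩, [.plain t M]⟩

/-- `H` is a history describing an execution of an OTM program. -/
def OTMHistory (H : History) : Prop :=
  ∃ (V : Term → Option Term) (M : Term) (t : TId) (s : MState),
    Exec V (initState M t) H s

/-! ### Histories, local operations and opacity graphs (Guerraoui–Kapałka) -/

/-- The transaction issuing an operation. -/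
def Op.tx : Op → TrName
  | .read k _ _ => k
  | .write k _ _ => k
  | .commit k => k
  | .abort k => k
  | .merge k _ => k

def Op.loc? : Op → Option Loc
  | .read _ r _ => some r
  | .write _ r _ => some r
  | _ => none

def Op.isWrite : Op → Bool
  | .write _ _ _ => true
  | _ => false

/-- `op` is an operation by transaction `k` on location `r`. -/
def Op.touches (op : Op) (k : TrName) (r : Loc) : Bool :=
  op.tx == k && op.loc? == some r

/-- The transactions occurring in a history. -/
def History.txs (H : History) : List TrName :=
  H.flatMap fun op =>
    match op with
    | .merge k j => [k, j]
    | op => [op.tx]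

/-- The last operation by `k` on `r` strictly before position `i`. -/
def History.prevOn (H : History) (k : TrName) (r : Loc) (i : ℕ) : Option Op :=
  ((H.take i).filter (fun op => op.touches k r)).getLast?

/-- The first operation by `k` on `r` strictly after position `i`. -/
def History.nextOn (H : History) (k : TrName) (r : Loc) (i : ℕ) : Option Op :=
  ((H.drop (i + 1)).filter (fun op => op.touches k r)).head?

/-- The operation at position `i` of `H` is local: a read whose previous
    operation by the same transaction on the same location is a write, or a
    write whose next operation by the same transaction on the same location
    is a write. -/
def History.localIdx (H : History) (i : ℕ) : Bool :=
  match H[i]? with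
  | some (.read k r _) =>
    match H.prevOn k r i with
    | some op => op.isWrite
    | none => false
  | some (.write k r _) =>
    match H.nextOn k r i with
    | some op => op.isWrite
    | none => false
  | _ => false

/-- `nonlocal(H)`: the longest sub-history of `H` without local operations. -/
def History.nonlocal (H : History) : History :=
  ((List.range H.length).filter (fun i => ! H.localIdx i)).filterMap
    (fun i => H[i]?)

def History.committed (H : History) (k : TrName) : Prop := Op.commit k ∈ H

def History.aborted (H : History) (k : TrName) : Prop := Op.abort k ∈ H

/-- A vertex/transaction is red iff it is running or aborted,
    i.e. not committed. -/
def History.red (H : History) (k : TrName) : Prop := ¬ H.committed k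

/-- `k` is live (running) in `H`. -/
def History.live (H : History) (k : TrName) : Prop :=
  k ∈ H.txs ∧ ¬ H.committed k ∧ ¬ H.aborted k

/-- `a ≺_H b`: `a` becomes committed or aborted in `H` before `b` issues
    its first operation. -/
def History.happensBefore (H : History) (a b : TrName) : Prop :=
  ∃ i, (H[(i : ℕ)]? = some (.commit a) ∨ H[(i : ℕ)]? = some (.abort a)) ∧
    ∀ j op, H[(j : ℕ)]? = some op → op.tx = b → i < j

/-- `k` reads (the value of) location `r` from `k'` in `H`. -/
def History.readsFromAt (H : History) (k k' : TrName) (r : Loc) : Prop :=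
  ∃ i j v, i < j ∧
    H[(i : ℕ)]? = some (.write k' r v) ∧
    H[(j : ℕ)]? = some (.read k r v) ∧
    ∀ l op, i < l → l < j → H[(l : ℕ)]? = some op →
      op.isWrite = true → op.loc? ≠ some r

/-- `k` reads something written by `k'` (merges are dependencies of this
    kind: a merge amounts to reading a fresh location written by `k'`). -/
def History.readsFrom (H : History) (k k' : TrName) : Prop :=
  (∃ r, H.readsFromAt k k' r) ∨ Op.merge k k' ∈ H

/-- The edge relation of the opacity graph `OPG(H, ≪)` (cases (a)–(d)). -/
def OPGEdge (H : History) (lt : TrName → TrName → Prop) (k k' : TrName) : Prop :=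
  H.happensBefore k' k
  ∨ H.readsFrom k k'
  ∨ (lt k' k ∧ ∃ r, (∃ v, Op.read k' r v ∈ H) ∧ (∃ v, Op.write k r v ∈ H))
  ∨ (H.committed k' ∧
      ∃ r k'', lt k' k'' ∧ (∃ v, Op.write k' r v ∈ H) ∧ H.readsFromAt k'' k r)

/-- An edge of `OPG(H, ≪)` is red iff case (b) applies. -/
def OPGRedEdge (H : History) (k k' : TrName) : Prop := H.readsFrom k k'

/-- `OPG(H, ≪)` is well-formed: all edges leaving red vertices are red. -/
def OPGWellFormed (H : History) (lt : TrName → TrName → Prop) : Prop :=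
  ∀ k k', OPGEdge H lt k k' → H.red k → OPGRedEdge H k k'

/-- `OPG(H, ≪)` is acyclic. -/
def OPGAcyclic (H : History) (lt : TrName → TrName → Prop) : Prop :=
  ∀ k, ¬ Relation.TransGen (OPGEdge H lt) k k

/-- `lt` is a total order on the transactions of `H`. -/
def TotalOrderOn (H : History) (lt : TrName → TrName → Prop) : Prop :=
  (∀ k, ¬ lt k k) ∧ (∀ a b c, lt a b → lt b c → lt a c) ∧
  (∀ k, k ∈ H.txs → ∀ k', k' ∈ H.txs → k ≠ k' → lt k k' ∨ lt k' k)

/-- `complete(H)`: `H` extended with a commit or an abort for every live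
    transaction of `H`. -/
def IsCompletion (H H' : History) : Prop :=
  ∃ C : History, H' = H ++ C ∧
    (∀ op ∈ C, (∃ k, op = Op.commit k ∨ op = Op.abort k) ∧ H.live op.tx) ∧
    (∀ k, H.live k → ∃ op ∈ C, Op.tx op = k) ∧
    C.Pairwise (fun a b => Op.tx a ≠ Op.tx b)

/-- Two histories are equivalent: same operations, and each transaction
    issues the same sequence of operations in both. -/
def EquivHist (S H : History) : Prop :=
  S.Perm H ∧ ∀ k, S.filter (fun op => op.tx == k) = H.filter (fun op => op.tx == k)

/-- A history is sequential if its happens-before relation is total. -/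
def SequentialHist (S : History) : Prop :=
  ∀ k, k ∈ S.txs → ∀ k', k' ∈ S.txs → k ≠ k' →
    S.happensBefore k k' ∨ S.happensBefore k' k

/-- Local consistency: every local read is preceded by a write (by the same
    transaction, on the same location) writing the read value. -/
def LocallyConsistent (H : History) : Prop :=
  ∀ i k r v, H[i]? = some (.read k r v) → H.localIdx i = true →
    H.prevOn k r i = some (.write k r v)

/-- Consistency of a history. -/
def Consistent (H : History) : Prop :=
  LocallyConsistent H ∧
  ∀ k r v, Op.read k r v ∈ H.nonlocal → ∃ k', Op.write k' r v ∈ H.nonlocal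

/-! ### STATEMENT 3 -/

/-- `AccessedIn P P' r j`: across the transition from thread family `P` to
    `P'`, some thread performed a read or a write of location `r`, ending up
    in transaction `j`. -/
def AccessedIn (P P' : Family) (r : Loc) (j : TrName) : Prop :=
  (∃ t E N k M, Thread.tx t (plug E (.readOTVar r)) N k ∈ P ∧
      Thread.tx t (plug E (.ret M)) N j ∈ P') ∨
  (∃ t E N k M, Thread.tx t (plug E (.writeOTVar r M)) N k ∈ P ∧
      Thread.tx t (plug E (.ret .unit)) N j ∈ P')

/-!
Every internal (`τ`) transition, including the nested runs inside `orElse` and `isolated`, is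
simulated by a renaming `σ` of transaction names: a claim of `r` by `k` survives as a claim of `r`
by `σ k`, a thread of transaction `k` survives in transaction `σ k`, and a thread whose redex
reads or writes `r` either still has that redex or now sees `r` claimed by `σ k` (Read1/Write1
create the claim, Read2/Write2 find it and merge into its owner, so `σ = id` or `σ = [k ↦ j]`).
Such simulations compose along `τ`-sequences. A labelled transition, on the other hand, never
changes a transactional thread that survives it. With unique thread identifiers, a thread that went
from an access of `r` to `return` therefore finds `r` claimed by its new transaction, and as `Δ` is a
function there is only one such transaction.
-/

open Function

def Term.accessedLoc : Term → Option Loc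
  | .bind M _ => M.accessedLoc
  | .readOTVar r => some r
  | .writeOTVar r _ => some r
  | _ => none

@[simp]
theorem accessedLoc_plug (E : Ctx) (M : Term) : (plug E M).accessedLoc = M.accessedLoc := by
  induction E generalizing M with
  | nil => rfl
  | cons N E ih => exact ih (.bind M N)

theorem TermStep.accessedLoc_eq_none {V : Term → Option Term} {M N : Term}
    (h : TermStep V M N) : M.accessedLoc = none := by
  cases h with
  | eval hM _ _ => cases M <;> simp_all [Term.isValue, Term.accessedLoc]
  | _ => rfl

namespace Family

@[simp]
theorem tids_cons (T : Thread) (P : Family) : tids (T :: P) = T.tid :: tids P := rfl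

@[simp]
theorem tids_append (P Q : Family) : tids (P ++ Q) = tids P ++ tids Q := List.map_append

@[simp]
theorem tids_renameTx (P : Family) (k j : TrName) : tids (P.renameTx k j) = tids P := by
  refine List.map_map.trans (List.map_congr_left fun T _ => ?_)
  cases T with
  | plain => rfl
  | tx => simp only [comp_apply, Thread.renameTx]; split_ifs <;> rfl

theorem tid_mem_tids {T : Thread} {P : Family} (h : T ∈ P) : T.tid ∈ tids P :=
  List.mem_map_of_mem h

theorem eq_of_tid_eq {P : Family} (hnd : (tids P).Nodup) {T T' : Thread} (h : T ∈ P)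
    (h' : T' ∈ P) (ht : T.tid = T'.tid) : T = T' :=
  List.inj_on_of_nodup_map hnd h h' ht

end Family

def Claimed (Δ : Loc → Option (Term × TrName)) (r : Loc) (k : TrName) : Prop :=
  ∃ M, Δ r = some (M, k)

namespace Claimed

variable {Δ : Loc → Option (Term × TrName)} {r s : Loc} {k j : TrName}

theorem unique {j₁ j₂ : TrName} (h₁ : Claimed Δ r j₁) (h₂ : Claimed Δ r j₂) : j₁ = j₂ := by
  obtain ⟨M₁, h₁⟩ := h₁
  obtain ⟨M₂, h₂⟩ := h₂
  rw [h₁, Option.some_inj, Prod.mk.injEq] at h₂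
  exact h₂.2

theorem updFn_self (M : Term) : Claimed (_root_.updFn Δ r (M, k)) r k :=
  ⟨M, by simp [_root_.updFn]⟩

theorem updFn_of_ne {v : Term × TrName} (h : Claimed Δ s k) (hs : s ≠ r) :
    Claimed (_root_.updFn Δ r v) s k := by
  simpa [Claimed, _root_.updFn, hs] using h

theorem ne_of_eq_none (h : Claimed Δ s k) (hr : Δ r = none) : s ≠ r := by
  rintro rfl
  obtain ⟨M, hM⟩ := h
  simp [hM] at hr

theorem renameWork {k' : TrName} (h : Claimed Δ r k') :
    Claimed (_root_.renameWork Δ k j) r (update id k j k') := by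
  obtain ⟨M, hM⟩ := h
  refine ⟨M, ?_⟩
  by_cases hk : k' = k <;> simp [_root_.renameWork, hM, hk]

theorem renameWork_of_target (h : Claimed Δ r j) : Claimed (_root_.renameWork Δ k j) r j := by
  simpa [update_apply] using h.renameWork (k := k) (j := j)

theorem write2 {k' : TrName} {M M₀ : Term} (hr : Δ r = some (M₀, j)) (h : Claimed Δ s k') :
    Claimed (_root_.updFn (_root_.renameWork Δ k j) r (M, j)) s (update id k j k') := by
  by_cases hs : s = r
  · subst hs
    rw [h.unique ⟨M₀, hr⟩]
    simpa [update_apply] using updFn_self (Δ := _root_.renameWork Δ k j) M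
  · exact h.renameWork.updFn_of_ne hs

end Claimed

def Thread.Tracked (σ : TrName → TrName) (Δ : Loc → Option (Term × TrName)) (P : Family) :
    Thread → Prop
  | .plain _ _ => True
  | .tx t A _ k => ∃ A' N', .tx t A' N' (σ k) ∈ P ∧
      ∀ r, A.accessedLoc = some r → A' = A ∨ Claimed Δ r (σ k)

structure Tracks (σ : TrName → TrName) (Δ : Loc → Option (Term × TrName)) (P : Family)
    (Δ' : Loc → Option (Term × TrName)) (P' : Family) : Prop where
  claimed {r : Loc} {k : TrName} : Claimed Δ r k → Claimed Δ' r (σ k)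
  tracked : ∀ T ∈ P, T.Tracked σ Δ' P'

section Tracking

variable {σ τ : TrName → TrName} {Δ Δ₂ Δ₃ : Loc → Option (Term × TrName)}
  {P P₂ P₃ Q : Family} {T : Thread} {t : TId} {A A' N N' : Term} {k : TrName}

theorem Thread.tracked_of_mem (h : T ∈ P) : T.Tracked id Δ P := by
  cases T with
  | plain => trivial
  | tx t A N k => exact ⟨A, N, h, fun _ _ => .inl rfl⟩

theorem Thread.tracked_of_renameTx_mem {j : TrName} (h : T.renameTx k j ∈ P) :
    T.Tracked (update id k j) Δ P := by
  cases T with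
  | plain => trivial
  | tx t A N k' =>
    refine ⟨A, N, ?_, fun _ _ => .inl rfl⟩
    by_cases hk : k' = k <;> simpa [Thread.renameTx, hk, update_apply] using h

theorem Thread.tracked_of_accessedLoc_eq_none (h : .tx t A' N' (σ k) ∈ P)
    (hA : A.accessedLoc = none) : (Thread.tx t A N k).Tracked σ Δ P :=
  ⟨A', N', h, fun r hr => by simp [hA] at hr⟩

theorem Thread.tracked_access {r : Loc} (hr : A.accessedLoc = some r)
    (h : .tx t A' N' (σ k) ∈ P) (hc : Claimed Δ r (σ k)) : (Thread.tx t A N k).Tracked σ Δ P :=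
  ⟨A', N', h, fun _ hr' => .inr (Option.some_inj.1 (hr.symm.trans hr') ▸ hc)⟩

theorem Thread.Tracked.mono (h : T.Tracked σ Δ P) (hPQ : P ⊆ Q) : T.Tracked σ Δ Q := by
  cases T with
  | plain => trivial
  | tx =>
    obtain ⟨A', N', hmem, hA⟩ := h
    exact ⟨A', N', hPQ hmem, hA⟩

theorem Thread.Tracked.trans (h : T.Tracked σ Δ₂ P₂) (h₂ : Tracks τ Δ₂ P₂ Δ₃ P₃) :
    T.Tracked (τ ∘ σ) Δ₃ P₃ := by
  cases T with
  | plain => trivial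
  | tx t A N k =>
    obtain ⟨A₂, N₂, hmem₂, hA₂⟩ := h
    obtain ⟨A₃, N₃, hmem₃, hA₃⟩ := h₂.tracked _ hmem₂
    refine ⟨A₃, N₃, hmem₃, fun r hr => ?_⟩
    rcases hA₂ r hr with rfl | hc
    · exact hA₃ r hr
    · exact .inr (h₂.claimed hc)

theorem Tracks.refl : Tracks id Δ P Δ P :=
  ⟨id, fun _ => Thread.tracked_of_mem⟩

theorem Tracks.trans (h₁ : Tracks σ Δ P Δ₂ P₂) (h₂ : Tracks τ Δ₂ P₂ Δ₃ P₃) :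
    Tracks (τ ∘ σ) Δ P Δ₃ P₃ :=
  ⟨fun hc => h₂.claimed (h₁.claimed hc), fun T hT => (h₁.tracked T hT).trans h₂⟩

theorem Tracks.perm {P' Q' : Family} (h : Tracks σ Δ P Δ₂ P') (hPQ : P.Perm Q)
    (hPQ' : P'.Perm Q') : Tracks σ Δ Q Δ₂ Q' :=
  ⟨h.claimed, fun T hT => (h.tracked T (hPQ.mem_iff.2 hT)).mono hPQ'.subset⟩

theorem Tracks.cons (hclaimed : ∀ {r k}, Claimed Δ r k → Claimed Δ₂ r (σ k))
    (hT : T.Tracked σ Δ₂ P₂) (hP : ∀ T' ∈ P, T'.Tracked σ Δ₂ P₂) :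
    Tracks σ Δ (T :: P) Δ₂ P₂ :=
  ⟨hclaimed, List.forall_mem_cons.2 ⟨hT, hP⟩⟩

theorem Tracks.nest {Q₁ Q₂ : Family} {M₁ C R B N₁ N₁' : Term} {j : TrName}
    (h : Tracks σ Δ (.tx t M₁ N₁ k :: P) Δ₂ (Q₁ ++ .tx t R N₁' j :: Q₂))
    (hnd : (Family.tids (Q₁ ++ .tx t R N₁' j :: Q₂)).Nodup) (ht : t ∉ Family.tids P)
    (hC : C.accessedLoc = none) :
    Tracks σ Δ (.tx t C N k :: P) Δ₂ (Q₁ ++ .tx t B N' j :: Q₂) := by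
  refine Tracks.cons h.claimed ?_ fun T hT => ?_
  · obtain ⟨A', N'', hmem, -⟩ := h.tracked _ List.mem_cons_self
    have hj : σ k = j := by
      have := Family.eq_of_tid_eq hnd hmem (List.mem_append_right _ List.mem_cons_self) rfl
      injection this
    exact Thread.tracked_of_accessedLoc_eq_none (A' := B) (N' := N') (by simp [hj]) hC
  · cases T with
    | plain => trivial
    | tx t' A N₀ k' =>
      obtain ⟨A', N'', hmem, hA⟩ := h.tracked _ (List.mem_cons_of_mem _ hT)
      have ht' : t' ≠ t := fun he => ht (he ▸ Family.tid_mem_tids hT)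
      refine ⟨A', N'', ?_, hA⟩
      simp only [List.mem_append, List.mem_cons, Thread.tx.injEq, ht', false_and,
        false_or] at hmem ⊢
      exact hmem

end Tracking

def TauSim (s s' : MState) : Prop :=
  (Family.tids s'.threads).Nodup ∧ ∃ σ, Tracks σ s.mem.work s.threads s'.mem.work s'.threads

section TauSim

variable {m m' : Mem} {P P' : Family} {t : TId} {k : TrName} {r : Loc}

theorem TauSim.refl {s : MState} (hnd : (Family.tids s.threads).Nodup) : TauSim s s :=
  ⟨hnd, id, .refl⟩

theorem TauSim.trans {s₁ s₂ s₃ : MState} (h₁ : TauSim s₁ s₂)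
    (h₂ : (Family.tids s₂.threads).Nodup → TauSim s₂ s₃) : TauSim s₁ s₃ := by
  obtain ⟨hnd₂, σ, h₁⟩ := h₁
  obtain ⟨hnd₃, τ, h₂⟩ := h₂ hnd₂
  exact ⟨hnd₃, τ ∘ σ, h₁.trans h₂⟩

theorem TauSim.perm {Q Q' : Family} (h : TauSim ⟨m, P⟩ ⟨m', P'⟩) (hPQ : P.Perm Q)
    (hPQ' : P'.Perm Q') : TauSim ⟨m, Q⟩ ⟨m', Q'⟩ := by
  obtain ⟨hnd, σ, h⟩ := h
  exact ⟨(hPQ'.map Thread.tid).nodup_iff.1 hnd, σ, h.perm hPQ hPQ'⟩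

theorem TauSim.of_cons {T : Thread} (hnd : (Family.tids P').Nodup)
    (hclaimed : ∀ {r k}, Claimed m.work r k → Claimed m'.work r k)
    (hT : T.Tracked id m'.work P') (hP : P ⊆ P') : TauSim ⟨m, T :: P⟩ ⟨m', P'⟩ :=
  ⟨hnd, id, Tracks.cons hclaimed hT fun _ h => Thread.tracked_of_mem (hP h)⟩

theorem TauSim.of_tx_cons {A B N : Term} (hnd : (Family.tids (.tx t A N k :: P)).Nodup)
    (hA : A.accessedLoc = none) (hclaimed : ∀ {r k}, Claimed m.work r k → Claimed m'.work r k) :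
    TauSim ⟨m, .tx t A N k :: P⟩ ⟨m', .tx t B N k :: P⟩ :=
  .of_cons (by simpa [Thread.tid] using hnd) hclaimed
    (Thread.tracked_of_accessedLoc_eq_none List.mem_cons_self hA) (List.subset_cons_self _ _)

theorem TauSim.fork {T T' F : Thread} (hnd : (Family.tids (T :: P)).Nodup)
    (hF : F.tid ∉ Family.tids (T :: P)) (htid : T'.tid = T.tid)
    (hT : T.Tracked id m'.work (T' :: F :: P))
    (hclaimed : ∀ {r k}, Claimed m.work r k → Claimed m'.work r k) :
    TauSim ⟨m, T :: P⟩ ⟨m', T' :: F :: P⟩ := by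
  refine .of_cons ?_ hclaimed hT fun _ h => List.mem_cons_of_mem _ (List.mem_cons_of_mem _ h)
  simp only [Family.tids_cons, List.nodup_cons, List.mem_cons, not_or] at hnd hF ⊢
  grind

theorem TauSim.claim {A B N M : Term} (hnd : (Family.tids (.tx t A N k :: P)).Nodup)
    (hA : A.accessedLoc = some r) (h₀ : m.work r = none) :
    TauSim ⟨m, .tx t A N k :: P⟩ ⟨{m with work := updFn m.work r (M, k)}, .tx t B N k :: P⟩ :=
  .of_cons (by simpa [Thread.tid] using hnd) (fun hc => hc.updFn_of_ne (hc.ne_of_eq_none h₀))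
    (Thread.tracked_access hA List.mem_cons_self (.updFn_self M)) (List.subset_cons_self _ _)

theorem TauSim.merge {A B N : Term} {j : TrName} (hnd : (Family.tids (.tx t A N k :: P)).Nodup)
    (hA : A.accessedLoc = some r)
    (hclaimed : ∀ {s k'}, Claimed m.work s k' → Claimed m'.work s (update id k j k'))
    (hr : Claimed m'.work r j) :
    TauSim ⟨m, .tx t A N k :: P⟩ ⟨m', Family.renameTx (.tx t B N k :: P) k j⟩ := by
  refine ⟨by simpa [Thread.tid] using hnd, update id k j, Tracks.cons hclaimed ?_ fun T hT =>
    Thread.tracked_of_renameTx_mem (List.mem_cons_of_mem _ (List.mem_map_of_mem hT))⟩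
  exact Thread.tracked_access (A' := B) (N' := N) hA
    (by simp [Family.renameTx, Thread.renameTx]) (by simpa using hr)

theorem TauSim.nest {E : Ctx} {Q₁ Q₂ : Family} {M₁ C R N : Term} {j : TrName}
    (ih : (Family.tids (.tx t M₁ (.ret .unit) k :: P)).Nodup →
      TauSim ⟨m, .tx t M₁ (.ret .unit) k :: P⟩ ⟨m', Q₁ ++ .tx t R (.ret .unit) j :: Q₂⟩)
    (hnd : (Family.tids (.tx t (plug E C) N k :: P)).Nodup) (hC : C.accessedLoc = none) :
    TauSim ⟨m, .tx t (plug E C) N k :: P⟩ ⟨m', Q₁ ++ .tx t (plug E R) N j :: Q₂⟩ := by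
  simp only [Family.tids_cons, Thread.tid, List.nodup_cons] at hnd
  obtain ⟨hnd', σ, h⟩ := ih (List.nodup_cons.2 hnd)
  exact ⟨by simpa [Thread.tid] using hnd', σ, h.nest hnd' hnd.1 (by simp [hC])⟩

end TauSim

structure PreservesTxThreads (P P' : Family) : Prop where
  tids_subset : Family.tids P' ⊆ Family.tids P
  mem {t : TId} {A N B N' : Term} {k j : TrName} :
    .tx t A N k ∈ P → .tx t B N' j ∈ P' → .tx t B N' j ∈ P

namespace PreservesTxThreads

variable {P P' Q Q' : Family}

theorem refl (P : Family) : PreservesTxThreads P P :=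
  ⟨List.Subset.refl _, fun _ h => h⟩

theorem perm (h : PreservesTxThreads P P') (hPQ : P.Perm Q) (hPQ' : P'.Perm Q') :
    PreservesTxThreads Q Q' where
  tids_subset := List.Subset.trans (hPQ'.map _).symm.subset
    (List.Subset.trans h.tids_subset (hPQ.map _).subset)
  mem hT hT' := hPQ.subset (h.mem (hPQ.symm.subset hT) (hPQ'.symm.subset hT'))

theorem append (hnd : (Family.tids (P ++ Q)).Nodup) (hP : PreservesTxThreads P P')
    (hQ : PreservesTxThreads Q Q') : PreservesTxThreads (P ++ Q) (P' ++ Q') where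
  tids_subset := by
    simp only [Family.tids_append, List.append_subset]
    exact ⟨List.subset_append_of_subset_left _ hP.tids_subset,
      List.subset_append_of_subset_right _ hQ.tids_subset⟩
  mem {t _ _ _ _ _ _} hT hT' := by
    have hdisj : t ∈ Family.tids P → t ∉ Family.tids Q := by
      rw [Family.tids_append, List.nodup_append] at hnd
      exact fun hP hQ => hnd.2.2 _ hP _ hQ rfl
    rcases List.mem_append.1 hT with hT | hT <;> rcases List.mem_append.1 hT' with hT' | hT'
    · exact List.mem_append_left _ (hP.mem hT hT')
    · exact absurd (hQ.tids_subset (Family.tid_mem_tids hT')) (hdisj (Family.tid_mem_tids hT))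
    · exact absurd (Family.tid_mem_tids hT) (hdisj (hP.tids_subset (Family.tid_mem_tids hT')))
    · exact List.mem_append_right _ (hQ.mem hT hT')

theorem plain_cons {t : TId} {A B : Term} :
    PreservesTxThreads (.plain t A :: P) (.plain t B :: P) where
  tids_subset := by simp [Thread.tid]
  mem _ hT' := List.mem_cons_of_mem _ (List.mem_of_ne_of_mem (by simp) hT')

theorem to_plain {T : Thread} {B : Term} : PreservesTxThreads [T] [.plain T.tid B] where
  tids_subset := by simp [Thread.tid]
  mem _ hT' := by simp at hT'

theorem plain_to_tx {t : TId} {A M N : Term} {k : TrName} :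
    PreservesTxThreads [.plain t A] [.tx t M N k] where
  tids_subset := by simp [Thread.tid]
  mem hT _ := by simp at hT

end PreservesTxThreads

def StepSim (s : MState) (β : Label) (s' : MState) : Prop :=
  (β = .tau → TauSim s s') ∧ (β ≠ .tau → PreservesTxThreads s.threads s'.threads)

namespace StepSim

variable {s s' : MState} {β : Label}

theorem tau (h : TauSim s s') : StepSim s .tau s' :=
  ⟨fun _ => h, fun h => absurd rfl h⟩

theorem labelled (hβ : β ≠ .tau) (h : PreservesTxThreads s.threads s'.threads) :
    StepSim s β s' :=
  ⟨fun h' => absurd h' hβ, fun _ => h⟩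

theorem perm {m m' : Mem} {P P' Q Q' : Family} (h : StepSim ⟨m, P⟩ β ⟨m', P'⟩)
    (hPQ : P.Perm Q) (hPQ' : P'.Perm Q') : StepSim ⟨m, Q⟩ β ⟨m', Q'⟩ :=
  ⟨fun hβ => (h.1 hβ).perm hPQ hPQ', fun hβ => (h.2 hβ).perm hPQ hPQ'⟩

end StepSim

theorem Step.stepSim {V : Term → Option Term} {s s' : MState} {β : Label} {ops : List Op}
    (h : Step V s β ops s') (hnd : (Family.tids s.threads).Nodup) : StepSim s β s' := by
  refine Step.rec (motive_1 := fun s β _ s' _ => (Family.tids s.threads).Nodup → StepSim s β s')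
    (motive_2 := fun s _ s' _ => (Family.tids s.threads).Nodup → TauSim s s')
    ?permC ?inChar ?outChar ?termPlain ?forkPlain ?termT ?forkT ?newVar ?read1 ?read2 ?write1 ?write2
    ?orElse1 ?orElse2 ?isolatedR ?newTx ?commitTx ?abort1 ?abort2 ?abort3 ?mcastAb ?mcastCo
    ?mcastGroup ?refl ?cons h hnd
  case permC => exact fun hPQ hPQ' _ ih hnd => (ih ((hPQ.map _).nodup_iff.2 hnd)).perm hPQ hPQ'
  case inChar | outChar => exact fun _ => .labelled nofun .plain_cons
  case termPlain =>
    exact fun _ hnd =>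
      .tau (.of_cons (by simpa [Thread.tid] using hnd) id trivial (List.subset_cons_self _ _))
  case forkPlain => exact fun hF hnd => .tau (.fork hnd hF rfl trivial id)
  case termT =>
    exact fun hMM' hnd =>
      .tau (.of_tx_cons hnd ((accessedLoc_plug _ _).trans hMM'.accessedLoc_eq_none) id)
  case forkT =>
    exact fun hF hnd => .tau (.fork hnd hF rfl
      (Thread.tracked_of_accessedLoc_eq_none List.mem_cons_self (accessedLoc_plug _ _)) id)
  case newVar =>
    exact fun _ h₀ hnd => .tau (.of_tx_cons hnd (accessedLoc_plug _ _)
      fun hc => hc.updFn_of_ne (hc.ne_of_eq_none h₀))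
  case read1 => exact fun h₀ _ hnd => .tau (.claim hnd (accessedLoc_plug _ _) h₀)
  case write1 => exact fun h₀ hnd => .tau (.claim hnd (accessedLoc_plug _ _) h₀)
  case read2 =>
    exact fun hr hnd => .tau (.merge hnd (accessedLoc_plug _ _) (fun hc => hc.renameWork)
      (Claimed.renameWork_of_target ⟨_, hr⟩))
  case write2 =>
    exact fun hr hnd => .tau (.merge hnd (accessedLoc_plug _ _) (Claimed.write2 hr)
      (.updFn_self _))
  case orElse1 | isolatedR => exact fun _ _ ih hnd => .tau (.nest ih hnd rfl)
  case orElse2 => exact fun _ _ hnd => .tau (.of_tx_cons hnd (accessedLoc_plug _ _) id)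
  case newTx => exact fun _ _ => .labelled nofun .plain_to_tx
  case commitTx => exact fun _ => .labelled nofun .to_plain
  case abort1 => exact fun _ _ => .labelled nofun .to_plain
  case abort2 | abort3 => exact fun _ _ _ => .labelled nofun .to_plain
  case mcastAb | mcastCo =>
    refine fun _ _ ih₁ ih₂ hnd => .labelled nofun (.append hnd ?_ ?_)
    · exact (ih₁ (Family.tids_append _ _ ▸ hnd).of_append_left).2 nofun
    · exact (ih₂ (Family.tids_append _ _ ▸ hnd).of_append_right).2 nofun
  case mcastGroup =>
    refine fun _ hβ _ ih hnd => .labelled ?ne (.append hnd ((ih ?_).2 ?ne) (.refl _))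
    case ne => exact ne_of_apply_ne Label.txName (hβ.trans_ne (Option.some_ne_none _))
    exact (Family.tids_append _ _ ▸ hnd).of_append_left
  case refl => exact fun _ hnd => .refl hnd
  case cons => exact fun _ _ ih₁ ih₂ hnd => ((ih₁ hnd).1 rfl).trans ih₂

theorem Step.claimed_of_access {V : Term → Option Term} {m m' : Mem} {P P' : Family}
    {β : Label} {ops : List Op} (h : Step V ⟨m, P⟩ β ops ⟨m', P'⟩)
    (hnd : (Family.tids P).Nodup) {t : TId} {A B N N' : Term} {k j : TrName} {r : Loc}
    (hT : .tx t A N k ∈ P) (hA : A.accessedLoc = some r) (hT' : .tx t B N' j ∈ P')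
    (hB : B.accessedLoc = none) : Claimed m'.work r j := by
  have hBA : B ≠ A := fun h => by simp [h, hA] at hB
  obtain ⟨htau, hlabelled⟩ := h.stepSim hnd
  by_cases hβ : β = .tau
  · obtain ⟨hnd', σ, htr⟩ := htau hβ
    obtain ⟨A', N'', hA', hprogress⟩ := htr.tracked _ hT
    obtain ⟨-, rfl, -, rfl⟩ := Thread.tx.inj (Family.eq_of_tid_eq hnd' hA' hT' rfl)
    exact (hprogress r hA).resolve_left hBA
  · have hT'' := (hlabelled hβ).mem hT hT'
    obtain ⟨-, hAB, -, -⟩ := Thread.tx.inj (Family.eq_of_tid_eq hnd hT hT'' rfl)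
    exact absurd hAB.symm hBA

/-- A thread running inside a transaction can read or write a location only
    if, as a result of the transition, that location is claimed by its
    transaction: after any `Read1`, `Read2`, `Write1` or `Write2` transition
    performed by a thread of transaction `k` on location `r`, the working
    memory of the resulting state maps `r` to a pair `(M, j)` where `j` is
    the (possibly merged) transaction name of that thread in the resulting
    state.  Consequently, at most one active transaction issues operations
    on any given location. -/
theorem otm_access_implies_claim (V : Term → Option Term) :
    ∀ (m m' : Mem) (P P' : Family) (β : Label) (ops : List Op),
      Step V ⟨m, P⟩ β ops ⟨m', P'⟩ →
      (Family.tids P).Nodup →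
      -- a read of `r` by a thread of transaction `k` leaves `r` claimed by
      -- the thread's resulting transaction `j`
      ((∀ t E N k r M j,
          Thread.tx t (plug E (.readOTVar r)) N k ∈ P →
          Thread.tx t (plug E (.ret M)) N j ∈ P' →
          ∃ M', m'.work r = some (M', j)) ∧
      -- a write of `r` by a thread of transaction `k` leaves `r` claimed by
      -- the thread's resulting transaction `j`
       (∀ t E N k r M j,
          Thread.tx t (plug E (.writeOTVar r M)) N k ∈ P →
          Thread.tx t (plug E (.ret .unit)) N j ∈ P' →
          ∃ M', m'.work r = some (M', j)) ∧
      -- hence at most one active transaction issues operations on any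
      -- given location
       (∀ r j₁ j₂, AccessedIn P P' r j₁ → AccessedIn P P' r j₂ → j₁ = j₂)) := by
  intro m m' P P' β ops hstep hnd
  have hclaimed : ∀ r j, AccessedIn P P' r j → Claimed m'.work r j := by
    rintro r j (⟨t, E, N, k, M, hT, hT'⟩ | ⟨t, E, N, k, M, hT, hT'⟩) <;>
      exact hstep.claimed_of_access hnd hT (accessedLoc_plug _ _) hT' (accessedLoc_plug _ _)
  exact ⟨fun t E N k r M j hT hT' => hclaimed r j (.inl ⟨t, E, N, k, M, hT, hT'⟩),
    fun t E N k r M j hT hT' => hclaimed r j (.inr ⟨t, E, N, k, M, hT, hT'⟩),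
    fun r _ _ h₁ h₂ => (hclaimed r _ h₁).unique (hclaimed r _ h₂)⟩
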